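/- Suppose w(y) > 0 for all y ∈ Bᶜ and there exist ε > 0, κ > 0 and a finite-valued measurable function h : Bᶜ ∪ A → [ε, ∞) such that: (i) w(y) ∫_{Bᶜ ∪ A} v(z) h(z) P(y, dz) ≤ h(y) v(y)² for every y ∈ Bᶜ; (ii) h(z) ≥ 1 for every z ∈ A; and (iii) v(z) ≥ κ for every z ∈ A. Then s*(y) = Σ_{n=0}^∞ (Kⁿη)(y) satisfies s*(y) ≤ ε⁻¹ κ⁻² v(y)² h(y) for every y ∈ Bᶜ. -/

import Mathlib

open MeasureTheory ProbabilityTheory Filter Set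
open scoped ENNReal NNReal

noncomputable section

/-- Normalizing constant `w(y) = ∫_{Bᶜ ∪ A} v(z) P(y, dz)`. -/
def wFun {𝒳 : Type*} [MeasurableSpace 𝒳] (P : Kernel 𝒳 𝒳) (B A : Set 𝒳)
    (v : 𝒳 → ℝ≥0∞) (y : 𝒳) : ℝ≥0∞ :=
  ∫⁻ z in Bᶜ ∪ A, v z ∂(P y)

/-- `η(y) = ∫_A (w(y)/v(z)) P(y, dz)`. -/
def etaFun {𝒳 : Type*} [MeasurableSpace 𝒳] (P : Kernel 𝒳 𝒳) (B A : Set 𝒳)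
    (v : 𝒳 → ℝ≥0∞) (y : 𝒳) : ℝ≥0∞ :=
  ∫⁻ z in A, wFun P B A v y / v z ∂(P y)

/-- The iterates `Kⁿη` under `K(y, dz) = (w(y)/v(z)) P(y, dz)` restricted to `z ∈ Bᶜ`,
with `K⁰η = η`. -/
def iterKvw {𝒳 : Type*} [MeasurableSpace 𝒳] (P : Kernel 𝒳 𝒳) (B A : Set 𝒳)
    (v : 𝒳 → ℝ≥0∞) : ℕ → 𝒳 → ℝ≥0∞
  | 0 => etaFun P B A v
  | n + 1 => fun y => ∫⁻ z in Bᶜ, iterKvw P B A v n z * (wFun P B A v y / v z) ∂(P y)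

lemma wFun_measurable {𝒳 : Type*} [MeasurableSpace 𝒳] (P : Kernel 𝒳 𝒳) [IsSFiniteKernel P]
    (B A : Set 𝒳) (hB : MeasurableSet B) (hA : MeasurableSet A)
    (v : 𝒳 → ℝ≥0∞) (hvmeas : Measurable v) :
    Measurable (wFun P B A v) :=
  Measurable.setLIntegral_kernel_prod_right
    (f := fun _ z => v z) (hvmeas.comp measurable_snd) (hB.compl.union hA)

lemma iterKvw_measurable {𝒳 : Type*} [MeasurableSpace 𝒳] (P : Kernel 𝒳 𝒳) [IsSFiniteKernel P]
    (B A : Set 𝒳) (hB : MeasurableSet B) (hA : MeasurableSet A)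
    (v : 𝒳 → ℝ≥0∞) (hvmeas : Measurable v) :
    ∀ n, Measurable (iterKvw P B A v n) := by
  have hw := wFun_measurable P B A hB hA v hvmeas
  intro n
  induction n with
  | zero =>
      exact Measurable.setLIntegral_kernel_prod_right
        (f := fun y z => wFun P B A v y / v z)
        ((hw.comp measurable_fst).div (hvmeas.comp measurable_snd)) hA
  | succ n ih =>
      exact Measurable.setLIntegral_kernel_prod_right
        (f := fun y z => iterKvw P B A v n z * (wFun P B A v y / v z))
        ((ih.comp measurable_snd).mul
          ((hw.comp measurable_fst).div (hvmeas.comp measurable_snd))) hB.compl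

/-- Lyapunov bound for the importance sampler driven by the approximation `v`:
if `w(y) ∫ v(z)h(z) P(y, dz) ≤ h(y)v(y)²` on `Bᶜ`, `h ≥ 1` and `v ≥ κ` on `A`, and
`h` takes values in `[ε, ∞)`, then `s*(y) = Σ_{n≥0}(Kⁿη)(y) ≤ ε⁻¹ κ⁻² v(y)² h(y)`. -/
theorem statement7 {𝒳 : Type*} [MeasurableSpace 𝒳]
    (P : Kernel 𝒳 𝒳) [IsMarkovKernel P]
    (B A : Set 𝒳) (hB : MeasurableSet B) (hA : MeasurableSet A) (hAB : A ⊆ B)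
    -- `v : Bᶜ ∪ A → (0, ∞)` measurable
    (v : 𝒳 → ℝ≥0∞) (hvmeas : Measurable v)
    (hv : ∀ z ∈ Bᶜ ∪ A, 0 < v z ∧ v z ≠ ⊤)
    -- `w` is finite and positive on `Bᶜ`
    (hwfin : ∀ y ∉ B, wFun P B A v y ≠ ⊤)
    (hwpos : ∀ y ∉ B, 0 < wFun P B A v y)
    -- the Lyapunov function `h` with values in `[ε, ∞)`
    (ε κ : ℝ≥0∞) (hε : 0 < ε) (hκ : 0 < κ)
    (h : 𝒳 → ℝ≥0∞) (hmeas : Measurable h)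
    (hrange : ∀ z ∈ Bᶜ ∪ A, ε ≤ h z ∧ h z ≠ ⊤)
    -- (i) the Lyapunov inequality
    (hLyap : ∀ y ∉ B,
      wFun P B A v y * ∫⁻ z in Bᶜ ∪ A, v z * h z ∂(P y) ≤ h y * (v y) ^ 2)
    -- (ii) `h ≥ 1` on `A`;  (iii) `v ≥ κ` on `A`
    (hhA : ∀ z ∈ A, 1 ≤ h z) (hvA : ∀ z ∈ A, κ ≤ v z) :
    ∀ y ∉ B,
      (∑' n : ℕ, iterKvw P B A v n y) ≤ ε⁻¹ * (κ ^ 2)⁻¹ * (v y) ^ 2 * h y := by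
  set c : ℝ≥0∞ := ε⁻¹ * (κ ^ 2)⁻¹ with hc
  have hc_top : c ≠ ⊤ :=
    ENNReal.mul_ne_top (ENNReal.inv_ne_top.mpr hε.ne')
      (ENNReal.inv_ne_top.mpr (pow_ne_zero 2 hκ.ne'))
  -- pointwise bound on `A`
  have hpoint : ∀ z ∈ A, (v z)⁻¹ ≤ c * (v z * h z) := by
    intro z hz
    have hzU : z ∈ Bᶜ ∪ A := Or.inr hz
    obtain ⟨hv0, hvt⟩ := hv z hzU
    obtain ⟨hεh, hht⟩ := hrange z hzU
    have hκt : κ ≠ ⊤ := (lt_of_le_of_lt (hvA z hz) hvt.lt_top).ne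
    have hεt : ε ≠ ⊤ := (lt_of_le_of_lt hεh hht.lt_top).ne
    calc (v z)⁻¹ ≤ κ⁻¹ := ENNReal.inv_le_inv' (hvA z hz)
      _ = c * (κ * ε) := by
          rw [show c * (κ * ε) = (ε⁻¹ * ε) * ((κ ^ 2)⁻¹ * κ) from by rw [hc]; ring]
          rw [ENNReal.inv_mul_cancel hε.ne' hεt, one_mul, pow_two,
            ENNReal.mul_inv (Or.inl hκ.ne') (Or.inl hκt), mul_assoc,
            ENNReal.inv_mul_cancel hκ.ne' hκt, mul_one]
      _ ≤ c * (v z * h z) := mul_le_mul_right (mul_le_mul' (hvA z hz) hεh) _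
  have hmeasiter := iterKvw_measurable P B A hB hA v hvmeas
  -- main induction on partial sums
  have key : ∀ N : ℕ, ∀ y ∉ B,
      (∑ n ∈ Finset.range N, iterKvw P B A v n y) ≤ c * (v y) ^ 2 * h y := by
    intro N
    induction N with
    | zero => intro y _; simp
    | succ N ih =>
        intro y hy
        have hwt : wFun P B A v y ≠ ⊤ := hwfin y hy
        rw [Finset.sum_range_succ']
        have hrw : ∀ n ∈ Finset.range N, iterKvw P B A v (n + 1) y
            = ∫⁻ z in Bᶜ, iterKvw P B A v n z * (wFun P B A v y / v z) ∂(P y) := by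
          intro n _; rfl
        rw [Finset.sum_congr rfl hrw,
          ← lintegral_finset_sum (f := fun n z => iterKvw P B A v n z * (wFun P B A v y / v z)) _ (fun n _ =>
            ((hmeasiter n).mul (measurable_const.div hvmeas)))]
        have int1 : (∫⁻ z in Bᶜ,
              ∑ n ∈ Finset.range N, iterKvw P B A v n z * (wFun P B A v y / v z) ∂(P y))
            ≤ ∫⁻ z in Bᶜ, (wFun P B A v y * c) * (v z * h z) ∂(P y) := by
          refine setLIntegral_mono' hB.compl (fun z hz => ?_)
          obtain ⟨hv0, hvt⟩ := hv z (Or.inl hz)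
          have hvv : v z ^ 2 * (v z)⁻¹ = v z := by
            rw [pow_two, mul_assoc, ENNReal.mul_inv_cancel hv0.ne' hvt, mul_one]
          calc ∑ n ∈ Finset.range N, iterKvw P B A v n z * (wFun P B A v y / v z)
              = (∑ n ∈ Finset.range N, iterKvw P B A v n z) * (wFun P B A v y / v z) :=
                (Finset.sum_mul _ _ _).symm
            _ ≤ (c * v z ^ 2 * h z) * (wFun P B A v y / v z) :=
                mul_le_mul_left (ih z hz) _
            _ = (wFun P B A v y * c) * ((v z ^ 2 * (v z)⁻¹) * h z) := by
                rw [div_eq_mul_inv]; ring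
            _ = (wFun P B A v y * c) * (v z * h z) := by rw [hvv]
        have int2 : iterKvw P B A v 0 y
            ≤ ∫⁻ z in A, (wFun P B A v y * c) * (v z * h z) ∂(P y) := by
          refine setLIntegral_mono' hA (fun z hz => ?_)
          calc wFun P B A v y / v z = wFun P B A v y * (v z)⁻¹ := div_eq_mul_inv _ _
            _ ≤ wFun P B A v y * (c * (v z * h z)) :=
                mul_le_mul_right (hpoint z hz) _
            _ = (wFun P B A v y * c) * (v z * h z) := by ring
        calc (∫⁻ z in Bᶜ,
              ∑ n ∈ Finset.range N, iterKvw P B A v n z * (wFun P B A v y / v z) ∂(P y))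
              + iterKvw P B A v 0 y
            ≤ (∫⁻ z in Bᶜ, (wFun P B A v y * c) * (v z * h z) ∂(P y))
              + ∫⁻ z in A, (wFun P B A v y * c) * (v z * h z) ∂(P y) :=
              add_le_add int1 int2
          _ = ∫⁻ z in Bᶜ ∪ A, (wFun P B A v y * c) * (v z * h z) ∂(P y) :=
              (lintegral_union hA (disjoint_compl_left.mono_right hAB)).symm
          _ = (wFun P B A v y * c) * ∫⁻ z in Bᶜ ∪ A, v z * h z ∂(P y) :=
              lintegral_const_mul' _ _ (ENNReal.mul_ne_top hwt hc_top)
          _ = c * (wFun P B A v y * ∫⁻ z in Bᶜ ∪ A, v z * h z ∂(P y)) := by ring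
          _ ≤ c * (h y * (v y) ^ 2) := mul_le_mul_right (hLyap y hy) c
          _ = c * (v y) ^ 2 * h y := by ring
  intro y hy
  rw [ENNReal.tsum_eq_iSup_nat]
  exact iSup_le fun N => key N y hy
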